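/- Let G(t,r) = a^{1/(1-α)} ∫_t^T e^{m₁(t,u) + m₂(t,u) r + σ²(t,u)/2} du + b^{1/(1-α)} e^{m₁(t,T) + m₂(t,T) r + σ²(t,T)/2}, where m₂(t,u) = (α/(1-α)) n(u-t) with n(x) = (1-e^{-κx})/κ and κ > 0, α ∈ (0,1), a,b ≥ 0 (not both zero), and m₁, σ² are continuous. Then for all t ∈ [0,T) and r ∈ ℝ, the logarithmic derivative satisfies |∂_r G(t,r)/G(t,r)| ≤ (α/(1-α)) n(T) ≤ α/((1-α)κ); in particular D_r G/G is globally bounded. -/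

import Mathlib

open Real intervalIntegral Set Metric

/-!
Differentiating under the integral sign multiplies each exponential `exp (m₁ + m₂ r + σ²/2)`
by its slope `m₂`, so `∂_r G` is a nonnegative combination of the same exponentials as `G`
with weights `m₂(t, u)`. Since `0 ≤ m₂(t, u) ≤ (α/(1-α)) n(T)` for `0 ≤ t ≤ u ≤ T` and `n`
increases to `1/κ`, this gives `0 ≤ ∂_r G ≤ (α/(1-α)) n(T) · G`, while `G > 0`.
-/

lemma monotone_one_sub_exp_neg_mul_div {κ : ℝ} (hκ : 0 ≤ κ) :
    Monotone fun x => (1 - exp (-κ * x)) / κ := by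
  intro x y hxy
  have : exp (-κ * y) ≤ exp (-κ * x) := exp_le_exp.2 (by nlinarith)
  exact div_le_div_of_nonneg_right (by linarith) hκ

lemma one_sub_exp_neg_mul_div_nonneg {κ x : ℝ} (hκ : 0 ≤ κ) (hx : 0 ≤ x) :
    0 ≤ (1 - exp (-κ * x)) / κ := by
  simpa using monotone_one_sub_exp_neg_mul_div hκ hx

lemma one_sub_exp_neg_mul_div_le {κ : ℝ} (hκ : 0 ≤ κ) (x : ℝ) :
    (1 - exp (-κ * x)) / κ ≤ 1 / κ :=
  div_le_div_of_nonneg_right (by linarith [exp_pos (-κ * x)]) hκ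

lemma hasDerivAt_exp_add_mul (c d x : ℝ) :
    HasDerivAt (fun y => exp (c + d * y)) (d * exp (c + d * x)) x := by
  simpa [mul_comm] using (((hasDerivAt_id x).const_mul d).const_add c).exp

lemma hasDerivAt_integral_exp_add_mul {g h : ℝ → ℝ} (hg : Continuous g) (hh : Continuous h)
    (a b x : ℝ) :
    HasDerivAt (fun y => ∫ u in a..b, exp (g u + h u * y))
      (∫ u in a..b, h u * exp (g u + h u * x)) x := by
  have hbound : ∀ u, ∀ y ∈ ball x 1,
      ‖h u * exp (g u + h u * y)‖ ≤ |h u| * exp (g u + |h u| * (|x| + 1)) := by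
    intro u y hy
    have hy : |y| ≤ |x| + 1 := by
      have := abs_sub_abs_le_abs_sub y x
      rw [mem_ball, dist_eq] at hy
      linarith
    have : h u * y ≤ |h u| * (|x| + 1) :=
      (le_abs_self _).trans ((abs_mul _ _).trans_le (by gcongr))
    rw [norm_mul, norm_eq_abs, norm_of_nonneg (exp_pos _).le]
    gcongr
  exact (hasDerivAt_integral_of_dominated_loc_of_deriv_le (ball_mem_nhds x one_pos)
    (.of_forall fun y => (Continuous.aestronglyMeasurable (by fun_prop)))
    (Continuous.intervalIntegrable (by fun_prop) _ _)
    (Continuous.aestronglyMeasurable (by fun_prop))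
    (.of_forall fun u _ => hbound u) (Continuous.intervalIntegrable (by fun_prop) _ _)
    (.of_forall fun u _ y _ => hasDerivAt_exp_add_mul _ _ _)).2

lemma integral_mul_mem_Icc {a b M : ℝ} {f w : ℝ → ℝ} (hab : a ≤ b) (hf : Continuous f)
    (hw : Continuous w) (hw0 : ∀ u ∈ Icc a b, 0 ≤ w u) (hfM : ∀ u ∈ Icc a b, f u ∈ Icc 0 M) :
    ∫ u in a..b, f u * w u ∈ Icc 0 (M * ∫ u in a..b, w u) := by
  refine ⟨integral_nonneg hab fun u hu => mul_nonneg (hfM u hu).1 (hw0 u hu), ?_⟩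
  rw [← intervalIntegral.integral_const_mul]
  exact integral_mono_on hab ((hf.mul hw).intervalIntegrable _ _)
    ((hw.const_mul M).intervalIntegrable _ _)
    fun u hu => mul_le_mul_of_nonneg_right (hfM u hu).2 (hw0 u hu)

theorem abs_deriv_div_le_of_mem_Icc {a b A B M x : ℝ} {g h G : ℝ → ℝ} (hg : Continuous g)
    (hh : Continuous h) (hab : a < b) (hA : 0 ≤ A) (hB : 0 ≤ B) (hAB : 0 < A ∨ 0 < B)
    (hhM : ∀ u ∈ Icc a b, h u ∈ Icc 0 M)
    (hG : ∀ y, G y = A * (∫ u in a..b, exp (g u + h u * y)) + B * exp (g b + h b * y)) :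
    |deriv G x / G x| ≤ M := by
  have hderiv : HasDerivAt G (A * (∫ u in a..b, h u * exp (g u + h u * x))
      + B * (h b * exp (g b + h b * x))) x := by
    rw [funext hG]
    exact ((hasDerivAt_integral_exp_add_mul hg hh a b x).const_mul A).add
      ((hasDerivAt_exp_add_mul _ _ x).const_mul B)
  have hI : 0 < ∫ u in a..b, exp (g u + h u * x) :=
    intervalIntegral_pos_of_pos_on (Continuous.intervalIntegrable (by fun_prop) _ _)
      (fun u _ => exp_pos _) hab
  have hGpos : 0 < G x := by
    rw [hG]
    rcases hAB with hA' | hB' <;> positivity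
  obtain ⟨hI'0, hI'M⟩ := integral_mul_mem_Icc hab.le hh (by fun_prop)
    (fun u _ => (exp_pos (g u + h u * x)).le) hhM
  obtain ⟨hb0, hbM⟩ := hhM b (right_mem_Icc.2 hab.le)
  rw [hderiv.deriv, abs_div, abs_of_pos hGpos, div_le_iff₀ hGpos, abs_of_nonneg (by positivity),
    hG]
  calc A * (∫ u in a..b, h u * exp (g u + h u * x)) + B * (h b * exp (g b + h b * x))
      ≤ A * (M * ∫ u in a..b, exp (g u + h u * x)) + B * (M * exp (g b + h b * x)) := by
        gcongr
    _ = M * (A * (∫ u in a..b, exp (g u + h u * x)) + B * exp (g b + h b * x)) := by ring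

theorem stmt18_general (T κ α a b : ℝ) (hκ : 0 < κ)
    (hα : α ∈ Set.Ioo (0:ℝ) 1) (ha : 0 ≤ a) (hb : 0 ≤ b) (hab : ¬(a = 0 ∧ b = 0))
    (m₁ σ2 : ℝ → ℝ → ℝ)
    (hm₁ : Continuous fun p : ℝ × ℝ => m₁ p.1 p.2)
    (hσ2 : Continuous fun p : ℝ × ℝ => σ2 p.1 p.2)
    (n : ℝ → ℝ) (hn : ∀ x, n x = (1 - Real.exp (-κ * x)) / κ)
    (m₂ : ℝ → ℝ → ℝ) (hm₂ : ∀ t u, m₂ t u = α / (1 - α) * n (u - t))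
    (G : ℝ → ℝ → ℝ)
    (hG : ∀ t r, G t r
      = a ^ (1 / (1 - α)) * (∫ u in t..T, Real.exp (m₁ t u + m₂ t u * r + σ2 t u / 2))
        + b ^ (1 / (1 - α)) * Real.exp (m₁ t T + m₂ t T * r + σ2 t T / 2)) :
    ∀ t ∈ Set.Ico (0:ℝ) T, ∀ r : ℝ,
      |deriv (fun r => G t r) r / G t r| ≤ α / (1 - α) * n T ∧
        α / (1 - α) * n T ≤ α / ((1 - α) * κ) := by
  obtain ⟨hα0, hα1⟩ := hα
  have hc : 0 < α / (1 - α) := div_pos hα0 (sub_pos.2 hα1)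
  intro t ⟨ht0, htT⟩ r
  have hm₂_mem : ∀ u ∈ Icc t T, m₂ t u ∈ Icc 0 (α / (1 - α) * n T) := by
    intro u ⟨htu, huT⟩
    rw [hm₂, hn, hn]
    exact ⟨mul_nonneg hc.le (one_sub_exp_neg_mul_div_nonneg hκ.le (by linarith)),
      mul_le_mul_of_nonneg_left (monotone_one_sub_exp_neg_mul_div hκ.le (by linarith)) hc.le⟩
  refine ⟨abs_deriv_div_le_of_mem_Icc (A := a ^ (1 / (1 - α))) (B := b ^ (1 / (1 - α)))
    (g := fun u => m₁ t u + σ2 t u / 2) (h := (m₂ t ·)) (by fun_prop) ?_ htT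
    (rpow_nonneg ha _) (rpow_nonneg hb _) ?_ hm₂_mem ?_, ?_⟩
  · rw [funext (hm₂ t), funext hn]
    fun_prop
  · exact (not_and_or.1 hab).imp (fun h => rpow_pos_of_pos (ha.lt_of_ne' h) _)
      (fun h => rpow_pos_of_pos (hb.lt_of_ne' h) _)
  · intro y
    simp only [hG, add_right_comm]
  · calc α / (1 - α) * n T ≤ α / (1 - α) * (1 / κ) := by
          gcongr
          exact hn T ▸ one_sub_exp_neg_mul_div_le hκ.le T
      _ = α / ((1 - α) * κ) := by rw [div_mul_div_comm, mul_one]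

/-- in the Vasicek model the logarithmic derivative `∂_r G / G`
of the value-function factor `G` is globally bounded by
`(α/(1-α)) n(T) ≤ α/((1-α)κ)`. -/
theorem stmt18 (T κ α a b : ℝ) (hT : 0 < T) (hκ : 0 < κ)
    (hα : α ∈ Set.Ioo (0:ℝ) 1) (ha : 0 ≤ a) (hb : 0 ≤ b) (hab : ¬(a = 0 ∧ b = 0))
    (m₁ σ2 : ℝ → ℝ → ℝ)
    (hm₁ : Continuous fun p : ℝ × ℝ => m₁ p.1 p.2)
    (hσ2 : Continuous fun p : ℝ × ℝ => σ2 p.1 p.2)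
    (n : ℝ → ℝ) (hn : ∀ x, n x = (1 - Real.exp (-κ * x)) / κ)
    (m₂ : ℝ → ℝ → ℝ) (hm₂ : ∀ t u, m₂ t u = α / (1 - α) * n (u - t))
    (G : ℝ → ℝ → ℝ)
    (hG : ∀ t r, G t r
      = a ^ (1 / (1 - α)) * (∫ u in t..T, Real.exp (m₁ t u + m₂ t u * r + σ2 t u / 2))
        + b ^ (1 / (1 - α)) * Real.exp (m₁ t T + m₂ t T * r + σ2 t T / 2)) :
    ∀ t ∈ Set.Ico (0:ℝ) T, ∀ r : ℝ,
      |deriv (fun r => G t r) r / G t r| ≤ α / (1 - α) * n T ∧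
        α / (1 - α) * n T ≤ α / ((1 - α) * κ) :=
  stmt18_general T κ α a b hκ hα ha hb hab m₁ σ2 hm₁ hσ2 n hn m₂ hm₂ G hG
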